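/- Let U ⊆ ℂ be open, let p : U → ℂ be of holomorphic type on U, witnessed locally by factorizations p = p₀·p₁ with p₀ holomorphic and p₁ smooth nonvanishing. Then there exists a smooth function A : U → ℂ such that ∂̄p(z) = A(z)·p(z) for all z ∈ U and A(z) = ∂̄p(z)/p(z) for every z ∈ U with p(z) ≠ 0; moreover the function z ↦ Δ(log|p|)(z), defined on {z ∈ U : p(z) ≠ 0}, extends to a smooth function on all of U, namely z ↦ 4·Re(∂A(z)). -/

import Mathlib

/-- `∂p/∂x` of `p : ℂ → ℂ` at `z`, identifying `ℂ` with `ℝ²`. -/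
noncomputable def pdx (p : ℂ → ℂ) (z : ℂ) : ℂ := fderiv ℝ p z 1

/-- `∂p/∂y` of `p : ℂ → ℂ` at `z`. -/
noncomputable def pdy (p : ℂ → ℂ) (z : ℂ) : ℂ := fderiv ℝ p z Complex.I

/-- The Wirtinger derivative `∂p = ½(∂p/∂x − i ∂p/∂y)`. -/
noncomputable def wirtinger (p : ℂ → ℂ) (z : ℂ) : ℂ :=
  (1 / 2 : ℂ) * (pdx p z - Complex.I * pdy p z)

/-- The Wirtinger derivative `∂̄p = ½(∂p/∂x + i ∂p/∂y)`. -/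
noncomputable def wirtingerBar (p : ℂ → ℂ) (z : ℂ) : ℂ :=
  (1 / 2 : ℂ) * (pdx p z + Complex.I * pdy p z)

/-- `∂u/∂x` of `u : ℂ → ℝ` at `z`. -/
noncomputable def pdxR (u : ℂ → ℝ) (z : ℂ) : ℝ := fderiv ℝ u z 1

/-- `∂u/∂y` of `u : ℂ → ℝ` at `z`. -/
noncomputable def pdyR (u : ℂ → ℝ) (z : ℂ) : ℝ := fderiv ℝ u z Complex.I

/-- Euclidean Laplacian `Δu = ∂²u/∂x² + ∂²u/∂y²` of `u : ℂ → ℝ`. -/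
noncomputable def lapR (u : ℂ → ℝ) (z : ℂ) : ℝ :=
  pdxR (fun w => pdxR u w) z + pdyR (fun w => pdyR u w) z

/-- `p : ℂ → ℂ` is of holomorphic type on an open set `U`: every point of `U` has an open
neighborhood `V ⊆ U` on which `p = p₀ * p₁`, with `p₀` holomorphic on `V` and `p₁` smooth
and nonvanishing on `V`. -/
def HolomorphicType (p : ℂ → ℂ) (U : Set ℂ) : Prop :=
  ∀ z ∈ U, ∃ V : Set ℂ, IsOpen V ∧ z ∈ V ∧ V ⊆ U ∧
    ∃ p₀ p₁ : ℂ → ℂ, DifferentiableOn ℂ p₀ V ∧ ContDiffOn ℝ (⊤ : ℕ∞) p₁ V ∧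
      (∀ w ∈ V, p₁ w ≠ 0) ∧ (∀ w ∈ V, p w = p₀ w * p₁ w)

open Complex Metric Set Filter Topology

lemma wirtingerBar_congr {f g : ℂ → ℂ} {w : ℂ} (h : f =ᶠ[𝓝 w] g) :
    wirtingerBar f w = wirtingerBar g w := by
  unfold wirtingerBar pdx pdy; rw [h.fderiv_eq]

lemma wirtinger_congr {f g : ℂ → ℂ} {w : ℂ} (h : f =ᶠ[𝓝 w] g) :
    wirtinger f w = wirtinger g w := by
  unfold wirtinger pdx pdy; rw [h.fderiv_eq]

lemma wirtingerBar_mul {f g : ℂ → ℂ} {w : ℂ} (hf : DifferentiableAt ℝ f w)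
    (hg : DifferentiableAt ℝ g w) :
    wirtingerBar (fun x => f x * g x) w = f w * wirtingerBar g w + g w * wirtingerBar f w := by
  unfold wirtingerBar pdx pdy
  rw [fderiv_fun_mul hf hg]
  simp [ContinuousLinearMap.add_apply, ContinuousLinearMap.smul_apply, smul_eq_mul]
  ring

lemma wirtingerBar_eq_zero {f : ℂ → ℂ} {w : ℂ} (hf : DifferentiableAt ℂ f w) :
    wirtingerBar f w = 0 := by
  unfold wirtingerBar pdx pdy
  rw [(hf.hasFDerivAt.restrictScalars ℝ).fderiv]
  have h1 : (fderiv ℂ f w) Complex.I = Complex.I * (fderiv ℂ f w) 1 := by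
    have := (fderiv ℂ f w).map_smul Complex.I (1 : ℂ)
    simpa [smul_eq_mul] using this
  simp only [ContinuousLinearMap.coe_restrictScalars', h1]
  have : Complex.I * (Complex.I * (fderiv ℂ f w) 1) = -((fderiv ℂ f w) 1) := by
    rw [← mul_assoc, Complex.I_mul_I]; ring
  rw [this]; ring

lemma contDiffOn_fderiv_apply {f : ℂ → ℂ} {V : Set ℂ} (hf : ContDiffOn ℝ (⊤ : ℕ∞) f V)
    (hV : IsOpen V) (v : ℂ) : ContDiffOn ℝ (⊤ : ℕ∞) (fun w => fderiv ℝ f w v) V := by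
  have h1 : ContDiffOn ℝ (⊤ : ℕ∞) (fun w => fderiv ℝ f w) V :=
    hf.fderiv_of_isOpen hV (by simp)
  exact (ContinuousLinearMap.apply ℝ ℂ v).contDiff.comp_contDiffOn h1

lemma contDiffOn_wirtingerBar {f : ℂ → ℂ} {V : Set ℂ} (hf : ContDiffOn ℝ (⊤ : ℕ∞) f V)
    (hV : IsOpen V) : ContDiffOn ℝ (⊤ : ℕ∞) (wirtingerBar f) V := by
  have h1 := contDiffOn_fderiv_apply hf hV 1
  have h2 := contDiffOn_fderiv_apply hf hV Complex.I
  exact contDiffOn_const.mul (h1.add (contDiffOn_const.mul h2))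

lemma contDiffOn_wirtinger {f : ℂ → ℂ} {V : Set ℂ} (hf : ContDiffOn ℝ (⊤ : ℕ∞) f V)
    (hV : IsOpen V) : ContDiffOn ℝ (⊤ : ℕ∞) (wirtinger f) V := by
  have h1 := contDiffOn_fderiv_apply hf hV 1
  have h2 := contDiffOn_fderiv_apply hf hV Complex.I
  exact contDiffOn_const.mul (h1.sub (contDiffOn_const.mul h2))

lemma contDiffOn_four_re_wirtinger {A : ℂ → ℂ} {U : Set ℂ} (hA : ContDiffOn ℝ (⊤ : ℕ∞) A U)
    (hU : IsOpen U) : ContDiffOn ℝ (⊤ : ℕ∞) (fun z => 4 * (wirtinger A z).re) U := by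
  have h := contDiffOn_wirtinger hA hU
  have hre : ContDiffOn ℝ (⊤ : ℕ∞) (fun z => (wirtinger A z).re) U :=
    Complex.reCLM.contDiff.comp_contDiffOn h
  exact contDiffOn_const.mul hre

lemma contDiffOn_inv_comp {f : ℂ → ℂ} {V : Set ℂ} (hf : ContDiffOn ℝ (⊤ : ℕ∞) f V)
    (hV : IsOpen V) (h0 : ∀ w ∈ V, f w ≠ 0) :
    ContDiffOn ℝ (⊤ : ℕ∞) (fun w => (f w)⁻¹) V := by
  intro w hw
  exact (((contDiffAt_inv ℂ (h0 w hw)).restrict_scalars ℝ).comp w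
    (hf.contDiffAt (hV.mem_nhds hw))).contDiffWithinAt


lemma local_sol (U : Set ℂ) (hU : IsOpen U) (p : ℂ → ℂ) (hp : HolomorphicType p U) :
    ∀ z ∈ U, ∃ r : ℝ, 0 < r ∧ ball z r ⊆ U ∧ ∃ B : ℂ → ℂ,
      ContDiffOn ℝ (⊤ : ℕ∞) B (ball z r) ∧
      (∀ w ∈ ball z r, wirtingerBar p w = B w * p w) ∧
      (((∀ w ∈ ball z r, p w = 0) ∧ ∀ w, B w = 0) ∨
        ∀ w ∈ ball z r, ∃ᶠ x in 𝓝 w, p x ≠ 0) := by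
  intro z hz
  obtain ⟨V, hVo, hzV, hVU, p₀, p₁, h₀, h₁, h₁ne, heq⟩ := hp z hz
  obtain ⟨r, hr, hrV⟩ := Metric.isOpen_iff.1 hVo z hzV
  have hballU : ball z r ⊆ U := hrV.trans hVU
  -- smoothness facts
  have hprod : ∀ w ∈ V, wirtingerBar p w = p₀ w * wirtingerBar p₁ w := by
    intro w hw
    have hnb : V ∈ 𝓝 w := hVo.mem_nhds hw
    have hfe : p =ᶠ[𝓝 w] fun x => p₀ x * p₁ x :=
      eventually_of_mem hnb (fun x hx => heq x hx)
    have hd₀ : DifferentiableAt ℂ p₀ w := h₀.differentiableAt hnb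
    have hd₁ : DifferentiableAt ℝ p₁ w :=
      (h₁.contDiffAt hnb).differentiableAt (by simp)
    rw [wirtingerBar_congr hfe, wirtingerBar_mul (hd₀.restrictScalars ℝ) hd₁,
      wirtingerBar_eq_zero hd₀]
    ring
  by_cases hz0 : ∀ w ∈ ball z r, p w = 0
  · refine ⟨r, hr, hballU, fun _ => 0, contDiffOn_const, ?_, Or.inl ⟨hz0, fun _ => rfl⟩⟩
    intro w hw
    have hfe : p =ᶠ[𝓝 w] fun _ => 0 :=
      eventually_of_mem (isOpen_ball.mem_nhds hw) (fun x hx => hz0 x hx)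
    rw [wirtingerBar_congr hfe]
    simp only [wirtingerBar, pdx, pdy, fderiv_const, fderiv_fun_const, Pi.zero_apply, ContinuousLinearMap.zero_apply, mul_zero, add_zero, zero_mul]
  · refine ⟨r, hr, hballU, fun w => wirtingerBar p₁ w / p₁ w, ?_, ?_, Or.inr ?_⟩
    · have : ContDiffOn ℝ (⊤ : ℕ∞) (fun w => wirtingerBar p₁ w * (p₁ w)⁻¹) V :=
        (contDiffOn_wirtingerBar h₁ hVo).mul (contDiffOn_inv_comp h₁ hVo h₁ne)
      exact (this.congr (fun w _ => (div_eq_mul_inv _ _))).mono hrV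
    · intro w hw
      have hwV := hrV hw
      rw [hprod w hwV, heq w hwV]
      field_simp [h₁ne w hwV]
    · intro w hw
      by_contra hcon
      rw [Filter.not_frequently] at hcon
      push_neg at hcon
      -- p = 0 near w, so p₀ = 0 near w
      have hnbV : V ∈ 𝓝 w := hVo.mem_nhds (hrV hw)
      have h₀0 : p₀ =ᶠ[𝓝 w] 0 := by
        filter_upwards [hcon, hnbV] with x hx hxV
        have := heq x hxV
        rw [hx] at this
        rcases mul_eq_zero.1 this.symm with h | h
        · exact h
        · exact absurd h (h₁ne x hxV)
      have han : AnalyticOnNhd ℂ p₀ (ball z r) :=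
        (h₀.analyticOnNhd hVo).mono hrV
      have hEq : EqOn p₀ 0 (ball z r) :=
        han.eqOn_zero_of_preconnected_of_eventuallyEq_zero
          (convex_ball z r).isPreconnected hw h₀0
      apply hz0
      intro x hx
      rw [heq x (hrV hx), hEq hx]
      simp

lemma eq_of_frequently_eq {f g : ℂ → ℂ} {w : ℂ} (hf : ContinuousAt f w) (hg : ContinuousAt g w)
    (h : ∃ᶠ x in 𝓝 w, f x = g x) : f w = g w := by
  have hw : w ∈ closure {x | f x = g x} := mem_closure_iff_frequently.2 h
  have hne : (𝓝[{x | f x = g x}] w).NeBot := mem_closure_iff_nhdsWithin_neBot.1 hw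
  have h1 : Tendsto f (𝓝[{x | f x = g x}] w) (𝓝 (f w)) := hf.continuousWithinAt.tendsto
  have h2 : Tendsto g (𝓝[{x | f x = g x}] w) (𝓝 (g w)) := hg.continuousWithinAt.tendsto
  have h3 : Tendsto g (𝓝[{x | f x = g x}] w) (𝓝 (f w)) :=
    h1.congr' (eventually_mem_nhdsWithin.mono fun x hx => hx)
  exact tendsto_nhds_unique h3 h2


lemma key5 {p A : ℂ → ℂ} {S : Set ℂ} {z₀ : ℂ} (hS : IsOpen S) (hz : z₀ ∈ S)
    (hf : ContDiffOn ℝ (⊤ : ℕ∞) p S) (hf0 : ∀ w ∈ S, p w ≠ 0)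
    (hA : ∀ w ∈ S, A w = wirtingerBar p w / p w) :
    lapR (fun w => Real.log (‖p w‖)) z₀ = 4 * (wirtinger A z₀).re := by
  -- Step 1: shrink to a ball where `p w / p z₀` stays in the slit plane
  have hp0 : p z₀ ≠ 0 := hf0 z₀ hz
  have habs0 : (0:ℝ) < ‖p z₀‖ := by
    simpa [norm_pos_iff] using hp0
  have hTo : IsOpen (S ∩ p ⁻¹' (ball (p z₀) (‖p z₀‖))) :=
    hf.continuousOn.isOpen_inter_preimage hS isOpen_ball
  have hzT : z₀ ∈ S ∩ p ⁻¹' (ball (p z₀) (‖p z₀‖)) := by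
    refine ⟨hz, ?_⟩
    simp [Metric.mem_ball, dist_self, habs0]
  obtain ⟨r, hr, hrT⟩ := Metric.isOpen_iff.1 hTo z₀ hzT
  have hrS : ball z₀ r ⊆ S := fun w hw => (hrT hw).1
  have hball0 : z₀ ∈ ball z₀ r := mem_ball_self hr
  have hpne : ∀ w ∈ ball z₀ r, p w ≠ 0 := fun w hw => hf0 w (hrS hw)
  have hslit : ∀ w ∈ ball z₀ r, p w / p z₀ ∈ slitPlane := by
    intro w hw
    have hd : ‖p w - p z₀‖ < ‖p z₀‖ := by
      have := (hrT hw).2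
      simpa [Metric.mem_ball, Complex.dist_eq] using this
    have h1 : ‖p w / p z₀ - 1‖ < 1 := by
      rw [show p w / p z₀ - 1 = (p w - p z₀) / p z₀ by field_simp]
      rw [norm_div]
      rw [div_lt_one habs0]
      exact hd
    rw [Complex.mem_slitPlane_iff]
    left
    have h2 : |(p w / p z₀ - 1).re| ≤ ‖p w / p z₀ - 1‖ := Complex.abs_re_le_norm _
    have h3 : (p w / p z₀ - 1).re > -1 := by
      exact (abs_lt.1 (lt_of_le_of_lt h2 h1)).1
    have h4 : (p w / p z₀).re = (p w / p z₀ - 1).re + 1 := by simp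
    linarith
  -- Step 2: the local logarithm g
  set g : ℂ → ℂ := fun w => Complex.log (p w / p z₀) with hgdef
  have hg : ContDiffOn ℝ (⊤ : ℕ∞) g (ball z₀ r) := by
    intro w hw
    have h1 : ContDiffAt ℝ (⊤ : ℕ∞) (fun w => p w / p z₀) w :=
      (hf.contDiffAt (hS.mem_nhds (hrS hw))).div_const (p z₀)
    have h2 : ContDiffAt ℝ (⊤ : ℕ∞) Complex.log (p w / p z₀) :=
      (Complex.contDiffAt_log (hslit w hw)).restrict_scalars ℝ
    exact (h2.comp w h1).contDiffWithinAt
  have hgdiff : ∀ w ∈ ball z₀ r, DifferentiableAt ℝ g w := fun w hw =>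
    (hg.contDiffAt (isOpen_ball.mem_nhds hw)).differentiableAt (by simp)
  have hpdiff : ∀ w ∈ ball z₀ r, DifferentiableAt ℝ p w := fun w hw =>
    (hf.contDiffAt (hS.mem_nhds (hrS hw))).differentiableAt (by simp)
  -- derivative of g
  have hDg : ∀ w ∈ ball z₀ r, fderiv ℝ g w = (p w)⁻¹ • fderiv ℝ p w := by
    intro w hw
    have hfd : HasFDerivAt p (fderiv ℝ p w) w := (hpdiff w hw).hasFDerivAt
    have h2 : HasFDerivAt (fun x => p x / p z₀) ((p z₀)⁻¹ • fderiv ℝ p w) w := by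
      simpa [div_eq_inv_mul] using hfd.const_mul (p z₀)⁻¹
    have hlog : HasFDerivAt Complex.log
        (((1 : ℂ →L[ℂ] ℂ).smulRight (p w / p z₀)⁻¹).restrictScalars ℝ) (p w / p z₀) :=
      ((Complex.hasDerivAt_log (hslit w hw)).hasFDerivAt).restrictScalars ℝ
    have hcomp := hlog.comp w h2
    have : HasFDerivAt g ((p w)⁻¹ • fderiv ℝ p w) w := by
      refine hcomp.congr_fderiv ?_
      ext v
      simp only [ContinuousLinearMap.smul_apply, smul_eq_mul,
        ContinuousLinearMap.coe_comp', Function.comp_apply,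
        ContinuousLinearMap.coe_restrictScalars', ContinuousLinearMap.smulRight_apply,
        ContinuousLinearMap.one_apply]
      field_simp [hpne w hw, hp0]
    exact this.fderiv
  -- wirtingerBar g = wirtingerBar p / p on the ball, hence equals A there
  have hwbg : ∀ w ∈ ball z₀ r, wirtingerBar g w = wirtingerBar p w / p w := by
    intro w hw
    unfold wirtingerBar pdx pdy
    rw [hDg w hw]
    simp only [ContinuousLinearMap.smul_apply, smul_eq_mul]
    field_simp [hpne w hw]
  have hAg : A =ᶠ[𝓝 z₀] wirtingerBar g := by
    filter_upwards [isOpen_ball.mem_nhds hball0] with w hw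
    rw [hA w (hrS hw), hwbg w hw]
  have hwA : wirtinger A z₀ = wirtinger (wirtingerBar g) z₀ := wirtinger_congr hAg
  -- second derivative of g
  have hgD : ContDiffOn ℝ (⊤ : ℕ∞) (fun w => fderiv ℝ g w) (ball z₀ r) :=
    hg.fderiv_of_isOpen isOpen_ball (by simp)
  have hDdiff : DifferentiableAt ℝ (fun w => fderiv ℝ g w) z₀ :=
    (hgD.contDiffAt (isOpen_ball.mem_nhds hball0)).differentiableAt (by simp)
  set H : ℂ →L[ℝ] ℂ →L[ℝ] ℂ := fderiv ℝ (fun w => fderiv ℝ g w) z₀ with hHdef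
  have hdv : ∀ v : ℂ, DifferentiableAt ℝ (fun w => fderiv ℝ g w v) z₀ := fun v =>
    hDdiff.clm_apply (differentiableAt_const v)
  have hEv : ∀ v : ℂ, fderiv ℝ (fun w => fderiv ℝ g w v) z₀ = H.flip v := by
    intro v
    rw [fderiv_clm_apply hDdiff (differentiableAt_const v)]
    simp [hHdef]
  have hsymm : H 1 Complex.I = H Complex.I 1 := by
    have h2 : ContDiffAt ℝ 2 g z₀ :=
      (hg.contDiffAt (isOpen_ball.mem_nhds hball0)).of_le (WithTop.coe_le_coe.2 (le_top : (2 : ℕ∞) ≤ ⊤))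
    exact h2.isSymmSndFDerivAt (by simp) 1 Complex.I
  -- value of ∂(∂̄ g) at z₀
  have hd2 : DifferentiableAt ℝ
      (fun w => fderiv ℝ g w 1 + Complex.I * fderiv ℝ g w Complex.I) z₀ :=
    (hdv 1).add ((hdv Complex.I).const_mul Complex.I)
  have hsum : fderiv ℝ (fun w => fderiv ℝ g w 1 + Complex.I * fderiv ℝ g w Complex.I) z₀
      = H.flip 1 + Complex.I • H.flip Complex.I := by
    rw [fderiv_fun_add (hdv 1) ((hdv Complex.I).const_mul Complex.I),
      fderiv_const_mul (hdv Complex.I) Complex.I, hEv 1, hEv Complex.I]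
  have e : fderiv ℝ (wirtingerBar g) z₀
      = (1/2 : ℂ) • (H.flip 1 + Complex.I • H.flip Complex.I) := by
    have : wirtingerBar g = fun w =>
        (1/2 : ℂ) * (fderiv ℝ g w 1 + Complex.I * fderiv ℝ g w Complex.I) := rfl
    rw [this, fderiv_const_mul hd2, hsum]
  have hval : wirtinger (wirtingerBar g) z₀
      = (1/4 : ℂ) * (H 1 1 + H Complex.I Complex.I) := by
    unfold wirtinger pdx pdy
    rw [e]
    simp only [ContinuousLinearMap.smul_apply, ContinuousLinearMap.add_apply,
      ContinuousLinearMap.flip_apply, smul_eq_mul]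
    rw [hsymm]
    linear_combination (-(1/4 : ℂ) * H Complex.I Complex.I) * Complex.I_sq
  -- the Laplacian side
  have hueq : ∀ w ∈ ball z₀ r,
      Real.log (‖p w‖) = (g w).re + Real.log (‖p z₀‖) := by
    intro w hw
    have hne : p w / p z₀ ≠ 0 := div_ne_zero (hpne w hw) hp0
    have hexp : Complex.exp (g w) = p w / p z₀ := Complex.exp_log hne
    have h1 : Real.exp ((g w).re) = ‖p w‖ / ‖p z₀‖ := by
      rw [← Complex.norm_exp, hexp, norm_div]
    have h2 : ‖p w‖ = Real.exp ((g w).re) * ‖p z₀‖ := by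
      rw [h1]; field_simp
    rw [h2, Real.log_mul (Real.exp_ne_zero _) (ne_of_gt habs0), Real.log_exp]
  have hDu : ∀ w ∈ ball z₀ r, fderiv ℝ (fun x => Real.log (‖p x‖)) w
      = (Complex.reCLM : ℂ →L[ℝ] ℝ).comp (fderiv ℝ g w) := by
    intro w hw
    have hev : (fun x => Real.log (‖p x‖))
        =ᶠ[𝓝 w] fun x => (g x).re + Real.log (‖p z₀‖) :=
      eventually_of_mem (isOpen_ball.mem_nhds hw) hueq
    rw [hev.fderiv_eq]
    have h1 : HasFDerivAt (fun x => (g x).re + Real.log (‖p z₀‖))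
        ((Complex.reCLM : ℂ →L[ℝ] ℝ).comp (fderiv ℝ g w)) w :=
      (Complex.reCLM.hasFDerivAt.comp w (hgdiff w hw).hasFDerivAt).add_const _
    exact h1.fderiv
  have hx_ev : (fun w => fderiv ℝ (fun x => Real.log (‖p x‖)) w 1)
      =ᶠ[𝓝 z₀] fun w => (fderiv ℝ g w 1).re := by
    filter_upwards [isOpen_ball.mem_nhds hball0] with w hw
    rw [hDu w hw]
    simp
  have hy_ev : (fun w => fderiv ℝ (fun x => Real.log (‖p x‖)) w Complex.I)
      =ᶠ[𝓝 z₀] fun w => (fderiv ℝ g w Complex.I).re := by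
    filter_upwards [isOpen_ball.mem_nhds hball0] with w hw
    rw [hDu w hw]
    simp
  have hre1 : HasFDerivAt (fun w => (fderiv ℝ g w 1).re)
      ((Complex.reCLM : ℂ →L[ℝ] ℝ).comp (H.flip 1)) z₀ := by
    have h1 : HasFDerivAt (fun w => fderiv ℝ g w 1) (H.flip 1) z₀ :=
      hEv 1 ▸ (hdv 1).hasFDerivAt
    exact Complex.reCLM.hasFDerivAt.comp z₀ h1
  have hre2 : HasFDerivAt (fun w => (fderiv ℝ g w Complex.I).re)
      ((Complex.reCLM : ℂ →L[ℝ] ℝ).comp (H.flip Complex.I)) z₀ := by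
    have h1 : HasFDerivAt (fun w => fderiv ℝ g w Complex.I) (H.flip Complex.I) z₀ :=
      hEv Complex.I ▸ (hdv Complex.I).hasFDerivAt
    exact Complex.reCLM.hasFDerivAt.comp z₀ h1
  have hX : pdxR (fun w => pdxR (fun x => Real.log (‖p x‖)) w) z₀
      = (H 1 1).re := by
    unfold pdxR
    rw [hx_ev.fderiv_eq, hre1.fderiv]
    simp
  have hY : pdyR (fun w => pdyR (fun x => Real.log (‖p x‖)) w) z₀
      = (H Complex.I Complex.I).re := by
    unfold pdyR
    rw [hy_ev.fderiv_eq, hre2.fderiv]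
    simp
  unfold lapR
  rw [hX, hY, hwA, hval]
  rw [show (1/4 : ℂ) = ((1/4 : ℝ) : ℂ) by norm_num, Complex.re_ofReal_mul]
  simp only [Complex.add_re]
  ring

/-- For `p` of holomorphic type on an open set `U ⊆ ℂ`, there is a smooth `A` on `U` with
`∂̄p = A·p` on `U`, `A = ∂̄p/p` off the zeros of `p`; moreover `Δ log |p|`, defined off the
zero set of `p`, extends to the smooth function `4 Re ∂A` on all of `U`. -/
theorem holomorphicType_dbar_quotient_extends
    (U : Set ℂ) (hU : IsOpen U)
    (p : ℂ → ℂ) (hp : HolomorphicType p U) :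
    ∃ A : ℂ → ℂ, ContDiffOn ℝ (⊤ : ℕ∞) A U ∧
      (∀ z ∈ U, wirtingerBar p z = A z * p z) ∧
      (∀ z ∈ U, p z ≠ 0 → A z = wirtingerBar p z / p z) ∧
      ContDiffOn ℝ (⊤ : ℕ∞) (fun z => 4 * (wirtinger A z).re) U ∧
      (∀ z ∈ U, p z ≠ 0 →
        lapR (fun w => Real.log (‖p w‖)) z = 4 * (wirtinger A z).re) := by
  choose! r hr hsub B hB1 hB2 hB3 using local_sol U hU p hp
  set A : ℂ → ℂ := fun x => B x x with hAdef
  have hagreeP : ∀ z ∈ U, ∀ z' ∈ U, ∀ w, w ∈ ball z (r z) → w ∈ ball z' (r z') →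
      B z w = B z' w := by
    intro z hz z' hz' w hw hw'
    rcases hB3 z hz with ⟨hz0, hBz0⟩ | hzd
    · rcases hB3 z' hz' with ⟨hz'0, hBz'0⟩ | hz'd
      · rw [hBz0, hBz'0]
      · exfalso
        have hev : ∀ᶠ x in 𝓝 w, p x = 0 :=
          eventually_of_mem (isOpen_ball.mem_nhds hw) fun x hx => hz0 x hx
        obtain ⟨x, hx1, hx2⟩ := ((hz'd w hw').and_eventually hev).exists
        exact hx1 hx2
    · rcases hB3 z' hz' with ⟨hz'0, hBz'0⟩ | hz'd
      · exfalso
        have hev : ∀ᶠ x in 𝓝 w, p x = 0 :=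
          eventually_of_mem (isOpen_ball.mem_nhds hw') fun x hx => hz'0 x hx
        obtain ⟨x, hx1, hx2⟩ := ((hzd w hw).and_eventually hev).exists
        exact hx1 hx2
      · apply eq_of_frequently_eq
          ((hB1 z hz).contDiffAt (isOpen_ball.mem_nhds hw)).continuousAt
          ((hB1 z' hz').contDiffAt (isOpen_ball.mem_nhds hw')).continuousAt
        have hmem : ∀ᶠ x in 𝓝 w, x ∈ ball z (r z) ∧ x ∈ ball z' (r z') :=
          (eventually_of_mem (isOpen_ball.mem_nhds hw) fun x hx => hx).and
            (eventually_of_mem (isOpen_ball.mem_nhds hw') fun x hx => hx)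
        refine ((hzd w hw).and_eventually hmem).mono ?_
        rintro x ⟨hpx, hx1, hx2⟩
        have e1 := hB2 z hz x hx1
        have e2 := hB2 z' hz' x hx2
        exact mul_right_cancel₀ hpx (e1.symm.trans e2)
  have hAeq : ∀ z ∈ U, ∀ w ∈ ball z (r z), A w = B z w := by
    intro z hz w hw
    have hwU : w ∈ U := hsub z hz hw
    exact hagreeP w hwU z hz w (mem_ball_self (hr w hwU)) hw
  have hA1 : ContDiffOn ℝ (⊤ : ℕ∞) A U := by
    apply contDiffOn_of_locally_contDiffOn
    intro z hz
    exact ⟨ball z (r z), isOpen_ball, mem_ball_self (hr z hz),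
      ((hB1 z hz).mono inter_subset_right).congr fun w hw => hAeq z hz w hw.2⟩
  have hA2 : ∀ z ∈ U, wirtingerBar p z = A z * p z := by
    intro z hz
    rw [hAeq z hz z (mem_ball_self (hr z hz))]
    exact hB2 z hz z (mem_ball_self (hr z hz))
  have hA3 : ∀ z ∈ U, p z ≠ 0 → A z = wirtingerBar p z / p z := fun z hz h0 =>
    (eq_div_iff h0).2 (hA2 z hz).symm
  refine ⟨A, hA1, hA2, hA3, contDiffOn_four_re_wirtinger hA1 hU, ?_⟩
  intro z₀ hz₀ hp0
  obtain ⟨V, hVo, hzV, hVU, p₀, p₁, h₀, h₁, h₁ne, heq⟩ := hp z₀ hz₀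
  have hpV : ContDiffOn ℝ (⊤ : ℕ∞) p V := by
    have h₀s : ContDiffOn ℝ (⊤ : ℕ∞) p₀ V :=
      (((h₀.analyticOnNhd hVo).contDiffOn_of_completeSpace (n := (⊤ : ℕ∞)))).restrict_scalars ℝ
    exact ((h₀s.mul (h₁ : ContDiffOn ℝ (⊤ : ℕ∞) p₁ V)).congr fun w hw => heq w hw)
  set S := V ∩ p ⁻¹' ({0}ᶜ) with hSdef
  have hSo : IsOpen S := hpV.continuousOn.isOpen_inter_preimage hVo isOpen_compl_singleton
  have hz₀S : z₀ ∈ S := ⟨hzV, hp0⟩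
  exact key5 hSo hz₀S (hpV.mono inter_subset_left) (fun w hw => hw.2)
    (fun w hw => hA3 w (hVU hw.1) hw.2)
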